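/- Let $U$ be a unitary operator on a Hilbert space $\mathcal{H}$, $h \in \mathcal{H}$, $S$ a bounded operator on $\mathcal{H}$ with range contained in the span of $h$, and $\mathcal{K}$ a closed subspace of $\mathcal{H}$ invariant under $U+S$. Suppose $(U+S)(\mathcal{K})$ is dense in $\mathcal{K}$, and either both $h \in \mathcal{K}$ and $U^{-1}h \in \mathcal{K}$, or both $h \notin \mathcal{K}$ and $U^{-1}h \notin \mathcal{K}$. Then the restriction $T$ of $U+S$ to $\mathcal{K}$ can be written as $T = V + R$, where $V$ is a unitary operator on $\mathcal{K}$ and $R$ is a bounded operator on $\mathcal{K}$ of rank at most $2$. -/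

import Mathlib

/-!
Let `T` be the restriction of `U + S` to `K` and `E = K ∩ ker S`, a closed subspace of `K` of
codimension at most one, say `K = E + ℂ x₀`, on which `T = U`. Since `T` has dense range contained
in the closed subspace `U E + ℂ T x₀`, also `U E` has codimension at most one in `K`, and the hypothesis on `h`
and `U⁻¹ h` rules out `U E = K` unless `E = K`. So `E` and `U E` have orthogonal complements in
`K` of equal finite dimension, `U : E → U E` extends to a unitary `V` of `K`, and `T - V`
vanishes on `E`, hence has rank at most one.
-/

open Submodule Module

theorem Set.MapsTo.denseRange_restrict {X Y : Type*} [TopologicalSpace Y] {f : X → Y}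
    {s : Set X} {t : Set Y} (hf : MapsTo f s t) (ht : t ⊆ closure (f '' s)) :
    DenseRange (hf.restrict f s t) := by
  rw [DenseRange, Subtype.dense_iff, MapsTo.range_restrict, image_preimage_eq_inter_range,
    Subtype.range_coe, inter_eq_left.mpr hf.image_subset]
  exact ht

theorem LinearMap.range_le_map_sup_span_singleton {R M N : Type*} [Ring R] [AddCommGroup M]
    [Module R M] [AddCommGroup N] [Module R N] (f : M →ₗ[R] N) {E : Submodule R M} {x : M}
    (hx : ⊤ ≤ E ⊔ R ∙ x) : range f ≤ E.map f ⊔ R ∙ f x := by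
  calc range f = (⊤ : Submodule R M).map f := range_eq_map f
    _ ≤ (E ⊔ R ∙ x).map f := map_mono hx
    _ = E.map f ⊔ R ∙ f x := by rw [Submodule.map_sup, map_span, Set.image_singleton]

theorem LinearMap.exists_top_le_ker_sup_span_singleton {𝕜 M N : Type*} [DivisionRing 𝕜]
    [AddCommGroup M] [Module 𝕜 M] [AddCommGroup N] [Module 𝕜 N] {f : M →ₗ[𝕜] N} {v : N}
    (hf : range f ≤ 𝕜 ∙ v) : ∃ x, ⊤ ≤ ker f ⊔ 𝕜 ∙ x := by
  by_cases hzero : f = 0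
  · exact ⟨0, by simp [hzero]⟩
  obtain ⟨x, hx⟩ : ∃ x, f x ≠ 0 := by
    by_contra! h
    exact hzero (LinearMap.ext h)
  obtain ⟨c, hc⟩ := mem_span_singleton.mp (hf (mem_range_self f x))
  have hc0 : c ≠ 0 := by rintro rfl; simp [← hc] at hx
  refine ⟨x, ?_⟩
  rw [sup_comm, ← comap_map_eq, map_span, Set.image_singleton, ← hc,
    span_singleton_smul_eq (IsUnit.mk0 c hc0)]
  exact fun y _ => hf (mem_range_self f y)

section InnerProductSpace

variable {𝕜 X : Type*} [RCLike 𝕜] [NormedAddCommGroup X] [InnerProductSpace 𝕜 X]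

theorem Submodule.orthogonal_le_span_starProjection {E : Submodule 𝕜 X}
    [E.HasOrthogonalProjection] {x : X} (hx : ⊤ ≤ E ⊔ 𝕜 ∙ x) :
    Eᗮ ≤ 𝕜 ∙ Eᗮ.starProjection x := by
  intro y hy
  obtain ⟨a, ha, b, hb, rfl⟩ := mem_sup.mp (hx (mem_top (x := y)))
  obtain ⟨c, rfl⟩ := mem_span_singleton.mp hb
  refine mem_span_singleton.mpr ⟨c, ?_⟩
  rw [← Eᗮ.starProjection_eq_self_iff.mpr hy, map_add, starProjection_orthogonal_apply_eq_zero ha,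
    zero_add, map_smul]

theorem Submodule.finiteDimensional_orthogonal_of_top_le_sup {E : Submodule 𝕜 X}
    [E.HasOrthogonalProjection] {x : X} (hx : ⊤ ≤ E ⊔ 𝕜 ∙ x) : FiniteDimensional 𝕜 Eᗮ :=
  finiteDimensional_of_le (orthogonal_le_span_starProjection hx)

theorem Submodule.finrank_orthogonal_le_one_of_top_le_sup {E : Submodule 𝕜 X}
    [E.HasOrthogonalProjection] {x : X} (hx : ⊤ ≤ E ⊔ 𝕜 ∙ x) : finrank 𝕜 Eᗮ ≤ 1 :=
  (finrank_mono (orthogonal_le_span_starProjection hx)).trans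
    (by simpa using finrank_span_le_card ({Eᗮ.starProjection x} : Set X))

theorem Submodule.finrank_orthogonal_eq_finrank_orthogonal {E F : Submodule 𝕜 X}
    [E.HasOrthogonalProjection] [F.HasOrthogonalProjection] {x y : X}
    (hx : ⊤ ≤ E ⊔ 𝕜 ∙ x) (hy : ⊤ ≤ F ⊔ 𝕜 ∙ y) (hEF : E = ⊤ ↔ F = ⊤) :
    finrank 𝕜 Eᗮ = finrank 𝕜 Fᗮ := by
  have := finiteDimensional_orthogonal_of_top_le_sup hx
  have := finiteDimensional_orthogonal_of_top_le_sup hy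
  have hzero : finrank 𝕜 Eᗮ = 0 ↔ finrank 𝕜 Fᗮ = 0 := by
    rw [Submodule.finrank_eq_zero, Submodule.finrank_eq_zero, orthogonal_eq_bot_iff,
      orthogonal_eq_bot_iff, hEF]
  have := finrank_orthogonal_le_one_of_top_le_sup hx
  have := finrank_orthogonal_le_one_of_top_le_sup hy
  omega

theorem LinearIsometryEquiv.exists_extend_of_finrank_orthogonal_eq {E F : Submodule 𝕜 X}
    [E.HasOrthogonalProjection] [F.HasOrthogonalProjection]
    [FiniteDimensional 𝕜 Eᗮ] [FiniteDimensional 𝕜 Fᗮ] (L : E ≃ₗᵢ[𝕜] F)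
    (h : finrank 𝕜 Eᗮ = finrank 𝕜 Fᗮ) : ∃ V : X ≃ₗᵢ[𝕜] X, ∀ x : E, V x = L x := by
  let M : Eᗮ ≃ₗᵢ[𝕜] Fᗮ :=
    (stdOrthonormalBasis 𝕜 Eᗮ).equiv (stdOrthonormalBasis 𝕜 Fᗮ) (finCongr h)
  refine ⟨E.orthogonalDecomposition.trans
    ((withLpProdCongr 2 L M).trans F.orthogonalDecomposition.symm), fun x => ?_⟩
  simp

end InnerProductSpace

theorem apply_eq_zero_of_subset_image_ker {𝕜 H : Type*} [Field 𝕜] [AddCommGroup H] [Module 𝕜 H]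
    (U : H ≃ₗ[𝕜] H) (h : H) (S : H →ₗ[𝕜] H) (hS : LinearMap.range S ≤ 𝕜 ∙ h) (K : Submodule 𝕜 H)
    (hinv : ∀ x ∈ K, U x + S x ∈ K) (halt : (h ∈ K ∧ U.symm h ∈ K) ∨ (h ∉ K ∧ U.symm h ∉ K))
    (hsub : ∀ z ∈ K, ∃ y ∈ K, S y = 0 ∧ U y = z) : ∀ x ∈ K, S x = 0 := by
  intro x hx
  obtain ⟨c, hc⟩ := mem_span_singleton.mp (hS (LinearMap.mem_range_self S x))
  rcases halt with ⟨hh, -⟩ | ⟨-, hUh⟩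
  · have hUx : U x ∈ K := by
      have := K.sub_mem (hinv x hx) (hc ▸ K.smul_mem c hh : S x ∈ K)
      rwa [add_sub_cancel_right] at this
    obtain ⟨y, -, hSy, hy⟩ := hsub _ hUx
    rwa [← U.injective hy]
  · by_contra hSx
    have hc0 : c ≠ 0 := by rintro rfl; simp [← hc] at hSx
    obtain ⟨y, hyK, -, hy⟩ := hsub _ (hinv x hx)
    apply hUh
    have : U.symm h = c⁻¹ • (y - x) := by
      rw [← U.symm_apply_apply (y - x), map_sub, hy, add_sub_cancel_left, ← hc, map_smul,
        inv_smul_smul₀ hc0]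
    rw [this]
    exact K.smul_mem _ (K.sub_mem hyK hx)

theorem ContinuousLinearMap.exists_eq_linearIsometryEquiv_add_rank_le_one {𝕜 X : Type*} [RCLike 𝕜]
    [NormedAddCommGroup X] [InnerProductSpace 𝕜 X] [CompleteSpace X] (T : X →L[𝕜] X)
    (hT : DenseRange T) (E : Submodule 𝕜 X) [CompleteSpace E] (hTE : ∀ x ∈ E, ‖T x‖ = ‖x‖)
    {x₀ : X} (hx₀ : ⊤ ≤ E ⊔ 𝕜 ∙ x₀) (hE : E.map T.toLinearMap = ⊤ → E = ⊤) :
    ∃ (V : X ≃ₗᵢ[𝕜] X) (R : X →L[𝕜] X),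
      Module.rank 𝕜 (LinearMap.range R.toLinearMap) ≤ 1 ∧ ∀ x, T x = V x + R x := by
  let Φ : E →ₗᵢ[𝕜] X := ⟨T.toLinearMap ∘ₗ E.subtype, fun x => hTE x x.2⟩
  let F : Submodule 𝕜 X := LinearMap.range Φ.toLinearMap
  have hFE : F = E.map T.toLinearMap := by
    rw [← range_subtype E, ← LinearMap.range_comp]
  have hFc : IsClosed (F : Set X) := Φ.isometry.isClosedEmbedding.isClosed_range
  have : CompleteSpace F := hFc.completeSpace_coe
  have hTx₀ : ⊤ ≤ F ⊔ 𝕜 ∙ T x₀ := by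
    rw [← (dense_iff_topologicalClosure_eq_top (s := LinearMap.range T.toLinearMap)).mp hT]
    refine topologicalClosure_minimal _ ?_ (isClosed_sup_finiteDimensional _ _ hFc)
    rw [hFE]
    exact LinearMap.range_le_map_sup_span_singleton T.toLinearMap hx₀
  have hEF : E = ⊤ ↔ F = ⊤ := by
    refine ⟨fun hE => ?_, fun hF => hE (hFE ▸ hF)⟩
    have hTx₀F : T x₀ ∈ F := ⟨⟨x₀, hE ▸ mem_top⟩, rfl⟩
    rwa [sup_eq_left.mpr ((span_singleton_le_iff_mem _ _).mpr hTx₀F), top_le_iff] at hTx₀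
  have := finiteDimensional_orthogonal_of_top_le_sup hx₀
  have := finiteDimensional_orthogonal_of_top_le_sup hTx₀
  obtain ⟨V, hV⟩ := Φ.equivRange.exists_extend_of_finrank_orthogonal_eq
    (finrank_orthogonal_eq_finrank_orthogonal hx₀ hTx₀ hEF)
  refine ⟨V, T - V, ?_, fun x => (add_sub_cancel _ _).symm⟩
  have hker : E.map (T - V : X →L[𝕜] X).toLinearMap = ⊥ := by
    rw [← LinearMap.le_ker_iff_map]
    exact fun x hx => sub_eq_zero.mpr (hV ⟨x, hx⟩).symm
  have hR := LinearMap.range_le_map_sup_span_singleton (T - V : X →L[𝕜] X).toLinearMap hx₀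
  rw [hker, bot_sup_eq] at hR
  exact (Submodule.rank_mono hR).trans ((rank_span_le _).trans_eq (Cardinal.mk_singleton _))

theorem stmt_11 {H : Type*} [NormedAddCommGroup H] [InnerProductSpace ℂ H] [CompleteSpace H]
    (U : H ≃ₗᵢ[ℂ] H) (h : H) (S : H →L[ℂ] H)
    (hS : LinearMap.range (S : H →ₗ[ℂ] H) ≤ Submodule.span ℂ {h})
    (K : Submodule ℂ H) (hKc : IsClosed (K : Set H))
    (hinv : ∀ x ∈ K, U x + S x ∈ K)
    (hdense : (K : Set H) ⊆ closure ((fun x => U x + S x) '' (K : Set H)))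
    (halt : (h ∈ K ∧ U.symm h ∈ K) ∨ (h ∉ K ∧ U.symm h ∉ K)) :
    ∃ (V : K ≃ₗᵢ[ℂ] K) (R : K →L[ℂ] K),
      Module.rank ℂ (LinearMap.range (R : K →ₗ[ℂ] K)) ≤ 2 ∧
      ∀ x : K, U (x : H) + S (x : H) = (V x : H) + (R x : H) := by
  have : CompleteSpace K := hKc.completeSpace_coe
  let T : K →L[ℂ] K := ((U : H →L[ℂ] H) + S).restrict hinv
  let E : Submodule ℂ K := (S ∘L K.subtypeL).ker
  have hTE (x : K) (hx : x ∈ E) : (T x : H) = U x := by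
    change U (x : H) + S x = U x
    rw [show S x = 0 from hx, add_zero]
  obtain ⟨x₀, hx₀⟩ : ∃ x₀, ⊤ ≤ E ⊔ ℂ ∙ x₀ :=
    LinearMap.exists_top_le_ker_sup_span_singleton (v := h) fun _ ⟨x, hx⟩ =>
      hx ▸ hS (LinearMap.mem_range_self _ _)
  have hE : E.map T.toLinearMap = ⊤ → E = ⊤ := by
    intro hF
    have hSK := apply_eq_zero_of_subset_image_ker U.toLinearEquiv h S hS K hinv halt
      fun z hz => by
        obtain ⟨y, hyE, hy⟩ : (⟨z, hz⟩ : K) ∈ E.map T.toLinearMap := hF ▸ mem_top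
        exact ⟨y, y.2, hyE, (hTE y hyE).symm.trans (congrArg Subtype.val hy)⟩
    exact eq_top_iff.mpr fun x _ => hSK x x.2
  obtain ⟨V, R, hR, hTVR⟩ := T.exists_eq_linearIsometryEquiv_add_rank_le_one
    (Set.MapsTo.denseRange_restrict hinv hdense) E
    (fun x hx => by rw [← K.norm_coe, hTE x hx, U.norm_map, K.norm_coe]) hx₀ hE
  exact ⟨V, R, hR.trans one_le_two, fun x => congrArg Subtype.val (hTVR x)⟩
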